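/- arXiv:1609.01395 — 4 statements merged into one kernel-verified Lean document; each statement's English description precedes it below -/
import Mathlib

section
/- Let Ω be an invertible real m×m matrix with Ωᵀ = -Ω, and let J : ℝ → Matrix (Fin m) (Fin m) ℝ be a family of matrices such that (J t) * (J t) = -1 and the matrix Ω * (J t) is symmetric for every t ∈ ℝ. Suppose J is differentiable at t₀ with derivative A (HasDerivAt J A t₀). Then the matrix A * Ω⁻¹ is symmetric: (A * Ω⁻¹)ᵀ = A * Ω⁻¹. -/
/-!
Differentiating the identity `(Ω * J t)ᵀ = Ω * J t` at `t₀` shows that `Ω * A` is symmetric.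
Since `Ω⁻¹` is skew along with `Ω`, the matrix `A * Ω⁻¹ = -((Ω⁻¹)ᵀ * (Ω * A) * Ω⁻¹)` is then a
congruence transform of a symmetric matrix.
-/

open Matrix

attribute [local instance] Matrix.normedAddCommGroup Matrix.normedSpace

namespace Matrix

variable {n R : Type*} [Fintype n]

theorem IsSymm.transpose_mul_mul [CommSemiring R] {S : Matrix n n R} (hS : S.IsSymm)
    (C : Matrix n n R) : (Cᵀ * S * C).IsSymm := by
  rw [IsSymm, transpose_mul, transpose_mul, transpose_transpose, hS.eq, Matrix.mul_assoc]

variable [DecidableEq n] [CommRing R]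

theorem nonsing_inv_neg {B : Matrix n n R} (hB : IsUnit B) : (-B)⁻¹ = -B⁻¹ := by
  have hdet : IsUnit B.det := (isUnit_iff_isUnit_det B).mp hB
  exact inv_eq_left_inv (by rw [neg_mul_neg, nonsing_inv_mul B hdet])

theorem transpose_nonsing_inv_of_transpose_eq_neg {B : Matrix n n R} (hB : IsUnit B)
    (hskew : Bᵀ = -B) : (B⁻¹)ᵀ = -B⁻¹ := by
  rw [transpose_nonsing_inv, hskew, nonsing_inv_neg hB]

theorem IsSymm.mul_nonsing_inv_of_transpose_eq_neg {A B : Matrix n n R} (hB : IsUnit B)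
    (hskew : Bᵀ = -B) (hBA : (B * A).IsSymm) : (A * B⁻¹).IsSymm := by
  have hdet : IsUnit B.det := (isUnit_iff_isUnit_det B).mp hB
  have hconj : A * B⁻¹ = -((B⁻¹)ᵀ * (B * A) * B⁻¹) := by
    rw [transpose_nonsing_inv_of_transpose_eq_neg hB hskew, neg_mul, neg_mul, neg_neg,
      nonsing_inv_mul_cancel_left B A hdet]
  rw [hconj]
  exact (hBA.transpose_mul_mul B⁻¹).neg

end Matrix

section Calculus

variable {𝕜 : Type*} [NontriviallyNormedField 𝕜] {m n : Type*} [Fintype n]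
  {E : Type*} [NormedAddCommGroup E] [NormedSpace 𝕜 E] {x : 𝕜}

theorem Matrix.hasDerivAt_iff_forall_entry {f : 𝕜 → Matrix m n E} {A : Matrix m n E} :
    HasDerivAt f A x ↔ ∀ i j, HasDerivAt (fun t => f t i j) (A i j) x :=
  (hasDerivAt_pi (φ := f)).trans (forall_congr' fun _ => hasDerivAt_pi)

theorem HasDerivAt.matrix_transpose [Fintype m] {f : 𝕜 → Matrix m n E} {A : Matrix m n E}
    (hf : HasDerivAt f A x) : HasDerivAt (fun t => (f t)ᵀ) Aᵀ x :=
  hasDerivAt_iff_forall_entry.2 fun i j => hasDerivAt_iff_forall_entry.1 hf j i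

theorem HasDerivAt.isSymm {f : 𝕜 → Matrix n n E} {A : Matrix n n E}
    (hf : ∀ t, (f t).IsSymm) (hA : HasDerivAt f A x) : A.IsSymm := by
  have hfT : (fun t => (f t)ᵀ) = f := funext fun t => (hf t).eq
  exact hA.matrix_transpose.unique (hfT ▸ hA)

theorem HasDerivAt.const_matrix_mul {l 𝔸 : Type*} [Fintype l] [Fintype m] [NormedRing 𝔸]
    [NormedAlgebra 𝕜 𝔸] {f : 𝕜 → Matrix m n 𝔸} {A : Matrix m n 𝔸} (B : Matrix l m 𝔸)
    (hf : HasDerivAt f A x) : HasDerivAt (fun t => B * f t) (B * A) x :=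
  hasDerivAt_iff_forall_entry.2 fun i j => by
    simp only [mul_apply]
    exact HasDerivAt.fun_sum fun k _ => (hasDerivAt_iff_forall_entry.1 hf k j).const_mul (B i k)

end Calculus

theorem deriv_bivector_symm_general
    (m : ℕ) (Ω : Matrix (Fin m) (Fin m) ℝ)
    (hΩinv : IsUnit Ω) (hΩskew : Ωᵀ = -Ω)
    (J : ℝ → Matrix (Fin m) (Fin m) ℝ)
    (hJΩ : ∀ t : ℝ, (Ω * J t)ᵀ = Ω * J t)
    (t₀ : ℝ) (A : Matrix (Fin m) (Fin m) ℝ) (hA : HasDerivAt J A t₀) :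
    (A * Ω⁻¹)ᵀ = A * Ω⁻¹ :=
  have hΩA : (Ω * A).IsSymm := (hA.const_matrix_mul Ω).isSymm hJΩ
  hΩA.mul_nonsing_inv_of_transpose_eq_neg hΩinv hΩskew

/-- For a differentiable family of complex structures compatible with the symplectic
form `Ω` (i.e. `Ω * J t` symmetric), the bivector `A * Ω⁻¹` built from the derivative
`A` of the family is symmetric. -/
theorem deriv_bivector_symm
    (m : ℕ) (Ω : Matrix (Fin m) (Fin m) ℝ)
    (hΩinv : IsUnit Ω) (hΩskew : Ωᵀ = -Ω)
    (J : ℝ → Matrix (Fin m) (Fin m) ℝ)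
    (hJ2 : ∀ t : ℝ, J t * J t = -1)
    (hJΩ : ∀ t : ℝ, (Ω * J t)ᵀ = Ω * J t)
    (t₀ : ℝ) (A : Matrix (Fin m) (Fin m) ℝ) (hA : HasDerivAt J A t₀) :
    (A * Ω⁻¹)ᵀ = A * Ω⁻¹ :=
  deriv_bivector_symm_general m Ω hΩinv hΩskew J hJΩ t₀ A hA
end

section
/- Let n be a natural number and let Ω₀ := Matrix.fromBlocks 0 1 (-1) 0 be the standard symplectic 2n×2n real matrix. Let X, Y be real n×n matrices with Xᵀ = X, Yᵀ = Y, and Y positive definite. Define the 2n×2n real matrix J := Matrix.fromBlocks (X * Y⁻¹) (-Y - X * Y⁻¹ * X) (Y⁻¹) (-(Y⁻¹ * X)). Then: (i) J * J = -1; (ii) Jᵀ * Ω₀ * J = Ω₀; and (iii) the matrix Ω₀ * J is symmetric and positive definite. -/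
open Matrix

lemma posDef_fromBlocks_diag {n m : Type*} [Fintype n] [Fintype m]
    {A : Matrix n n ℝ} {D : Matrix m m ℝ} (hA : A.PosDef) (hD : D.PosDef) :
    (Matrix.fromBlocks A 0 0 D).PosDef := by
  rw [Matrix.posDef_iff_dotProduct_mulVec]
  constructor
  · have hA' := hA.1
    have hD' := hD.1
    rw [Matrix.IsHermitian, Matrix.conjTranspose_eq_transpose_of_trivial] at hA' hD' ⊢
    rw [Matrix.fromBlocks_transpose, hA', hD']
    simp
  · intro x hx
    have hxe : x = Sum.elim (x ∘ Sum.inl) (x ∘ Sum.inr) := by ext (i | i) <;> rfl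
    rw [hxe, Matrix.fromBlocks_mulVec]
    simp only [Matrix.zero_mulVec, add_zero, zero_add]
    have hstar : star (Sum.elim (x ∘ Sum.inl) (x ∘ Sum.inr)) =
        Sum.elim (star (x ∘ Sum.inl)) (star (x ∘ Sum.inr)) := by ext (i | i) <;> rfl
    rw [hstar, sumElim_dotProduct_sumElim]
    have hor : x ∘ Sum.inl ≠ 0 ∨ x ∘ Sum.inr ≠ 0 := by
      by_contra h
      push_neg at h
      exact hx (by ext (i | i); exacts [congrFun h.1 i, congrFun h.2 i])
    rcases hor with h | h
    · exact add_pos_of_pos_of_nonneg (hA.dotProduct_mulVec_pos h) (hD.posSemidef.dotProduct_mulVec_nonneg _)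
    · exact add_pos_of_nonneg_of_pos (hA.posSemidef.dotProduct_mulVec_nonneg _) (hD.dotProduct_mulVec_pos h)

lemma posDef_conj {n : Type*} [Fintype n] [DecidableEq n]
    {D P Q : Matrix n n ℝ} (hD : D.PosDef) (hQP : Q * P = 1) :
    (Pᵀ * D * P).PosDef := by
  rw [Matrix.posDef_iff_dotProduct_mulVec]
  constructor
  · have h : Pᴴ = Pᵀ := Matrix.conjTranspose_eq_transpose_of_trivial P
    have := Matrix.isHermitian_conjTranspose_mul_mul P hD.1
    rwa [h] at this
  · intro x hx
    have hPx : P *ᵥ x ≠ 0 := by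
      intro h0
      apply hx
      have h2 : Q *ᵥ (P *ᵥ x) = x := by rw [Matrix.mulVec_mulVec, hQP, Matrix.one_mulVec]
      rw [h0, Matrix.mulVec_zero] at h2
      exact h2.symm
    have hpos := hD.dotProduct_mulVec_pos hPx
    have heq : star x ⬝ᵥ ((Pᵀ * D * P) *ᵥ x) = star (P *ᵥ x) ⬝ᵥ (D *ᵥ (P *ᵥ x)) := by
      simp only [star_trivial, ← Matrix.mulVec_mulVec, Matrix.dotProduct_mulVec,
        Matrix.vecMul_transpose]
    rw [heq]
    exact hpos

/-- Each point `Z = X + iY` of the Siegel upper half space gives a linear complex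
structure `J` on `ℝ^{2n}` compatible with the standard symplectic form `Ω₀`. -/
theorem siegel_point_gives_compatible_complex_structure
    (n : ℕ) (X Y : Matrix (Fin n) (Fin n) ℝ)
    (hX : Xᵀ = X) (hY : Yᵀ = Y) (hYpos : Y.PosDef) :
    letI Ω₀ : Matrix (Fin n ⊕ Fin n) (Fin n ⊕ Fin n) ℝ := Matrix.fromBlocks 0 1 (-1) 0
    letI J : Matrix (Fin n ⊕ Fin n) (Fin n ⊕ Fin n) ℝ :=
      Matrix.fromBlocks (X * Y⁻¹) (-Y - X * Y⁻¹ * X) (Y⁻¹) (-(Y⁻¹ * X))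
    J * J = -1 ∧ Jᵀ * Ω₀ * J = Ω₀ ∧ (Ω₀ * J).IsSymm ∧ (Ω₀ * J).PosDef := by
  set Ω₀ : Matrix (Fin n ⊕ Fin n) (Fin n ⊕ Fin n) ℝ := Matrix.fromBlocks 0 1 (-1) 0 with hΩ
  set J : Matrix (Fin n ⊕ Fin n) (Fin n ⊕ Fin n) ℝ :=
    Matrix.fromBlocks (X * Y⁻¹) (-Y - X * Y⁻¹ * X) (Y⁻¹) (-(Y⁻¹ * X)) with hJ
  have hdet : IsUnit Y.det := (Matrix.isUnit_iff_isUnit_det Y).mp hYpos.isUnit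
  have hc1 : ∀ Z : Matrix (Fin n) (Fin n) ℝ, Y⁻¹ * (Y * Z) = Z := fun Z => by
    rw [← Matrix.mul_assoc, Matrix.nonsing_inv_mul Y hdet, Matrix.one_mul]
  have hc2 : ∀ Z : Matrix (Fin n) (Fin n) ℝ, Y * (Y⁻¹ * Z) = Z := fun Z => by
    rw [← Matrix.mul_assoc, Matrix.mul_nonsing_inv Y hdet, Matrix.one_mul]
  have hYinvT : (Y⁻¹)ᵀ = Y⁻¹ := by rw [Matrix.transpose_nonsing_inv, hY]
  -- (i) J * J = -1
  have hneg : (-1 : Matrix (Fin n ⊕ Fin n) (Fin n ⊕ Fin n) ℝ) =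
      Matrix.fromBlocks (-1) 0 0 (-1) := by
    ext (i | i) (j | j) <;> simp [Matrix.one_apply]
  have h1 : J * J = -1 := by
    rw [hJ, Matrix.fromBlocks_multiply, hneg]
    congr 1 <;> simp [Matrix.mul_sub, Matrix.sub_mul, Matrix.mul_assoc, hc1, hc2,
      Matrix.nonsing_inv_mul Y hdet, Matrix.mul_nonsing_inv Y hdet] <;> abel
  -- Ω₀ * J explicitly
  have hS : Ω₀ * J = Matrix.fromBlocks (Y⁻¹) (-(Y⁻¹ * X)) (-(X * Y⁻¹)) (Y + X * Y⁻¹ * X) := by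
    rw [hΩ, hJ, Matrix.fromBlocks_multiply]
    congr 1 <;> simp <;> abel
  -- (iii) symmetry
  have hsymm : (Ω₀ * J).IsSymm := by
    rw [hS, Matrix.IsSymm, Matrix.fromBlocks_transpose]
    rw [show (Y⁻¹)ᵀ = Y⁻¹ from hYinvT,
      show (-(Y⁻¹ * X))ᵀ = -(X * Y⁻¹) by rw [Matrix.transpose_neg, Matrix.transpose_mul, hYinvT, hX],
      show (-(X * Y⁻¹))ᵀ = -(Y⁻¹ * X) by rw [Matrix.transpose_neg, Matrix.transpose_mul, hYinvT, hX],
      show (Y + X * Y⁻¹ * X)ᵀ = Y + X * Y⁻¹ * X by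
        rw [Matrix.transpose_add, hY, Matrix.transpose_mul, Matrix.transpose_mul, hYinvT, hX,
          Matrix.mul_assoc]]
  -- (ii) follows from (i) and symmetry
  have h2 : Jᵀ * Ω₀ * J = Ω₀ := by
    have hOT : Ω₀ᵀ = -Ω₀ := by
      rw [hΩ, Matrix.fromBlocks_transpose]
      ext (i | i) (j | j) <;> simp [Matrix.fromBlocks]
    calc Jᵀ * Ω₀ * J = Jᵀ * (Ω₀ * J) := by rw [Matrix.mul_assoc]
      _ = Jᵀ * (Ω₀ * J)ᵀ := by rw [hsymm.eq]
      _ = (Ω₀ * J * J)ᵀ := (Matrix.transpose_mul (Ω₀ * J) J).symm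
      _ = (Ω₀ * (J * J))ᵀ := by rw [Matrix.mul_assoc]
      _ = (-Ω₀)ᵀ := by rw [h1, Matrix.mul_neg, Matrix.mul_one]
      _ = Ω₀ := by rw [Matrix.transpose_neg, hOT, neg_neg]
  -- (iv) positive definiteness
  have hP : (Matrix.fromBlocks 1 X 0 1 : Matrix (Fin n ⊕ Fin n) (Fin n ⊕ Fin n) ℝ) *
      Matrix.fromBlocks 1 (-X) 0 1 = 1 := by
    rw [Matrix.fromBlocks_multiply]
    simp [← Matrix.fromBlocks_one]
  have hfact : Ω₀ * J = (Matrix.fromBlocks 1 (-X) 0 1)ᵀ *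
      Matrix.fromBlocks Y⁻¹ 0 0 Y * Matrix.fromBlocks 1 (-X) 0 1 := by
    rw [hS, Matrix.fromBlocks_transpose, Matrix.fromBlocks_multiply, Matrix.fromBlocks_multiply]
    congr 1 <;> simp [hX, Matrix.mul_assoc] <;> abel
  have hpos : (Ω₀ * J).PosDef := by
    rw [hfact]
    exact posDef_conj (posDef_fromBlocks_diag hYpos.inv hYpos) hP
  exact ⟨h1, h2, hsymm, hpos⟩
end

section
/- Let n be a natural number and let Ω₀ := Matrix.fromBlocks 0 1 (-1) 0 be the standard symplectic 2n×2n real matrix. The map sending a pair (X, Y) of real symmetric n×n matrices with Y positive definite (equivalently, a point Z = X + iY of the Siegel upper half space) to the 2n×2n real matrix J_Z := Matrix.fromBlocks (X * Y⁻¹) (-Y - X * Y⁻¹ * X) (Y⁻¹) (-(Y⁻¹ * X)) is a bijection onto the set of all real 2n×2n matrices J satisfying J * J = -1, Jᵀ * Ω₀ * J = Ω₀, and Ω₀ * J symmetric positive definite. -/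
/-!
Write `J = [[A, B], [C, D]]`, so that `Ω₀ J = [[C, D], [-A, -B]]`. If `J` is compatible, `C` is
positive definite as a diagonal block of `Ω₀ J`, and `J ↦ (A C⁻¹, C⁻¹)` inverts `Z ↦ J_Z`: the
block equations `A A + B C = -1` and `C A + D C = 0` of `J² = -1` recover `B` and `D`, while the
symmetry of `Ω₀ J` makes `A C⁻¹` symmetric. Conversely, `J_Z² = -1` is a direct computation,
and `J_Zᵀ Ω₀ J_Z = Ω₀` follows from it because `Ω₀ J_Z` is symmetric.
-/

open Matrix
open scoped ComplexOrder

namespace Matrix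

theorem PosDef.posDef_fromBlocks₁₁_iff {𝕜 m n : Type*} [RCLike 𝕜] [Fintype m] [Fintype n]
    [DecidableEq m] [DecidableEq n] {A : Matrix m m 𝕜} (B : Matrix m n 𝕜) (D : Matrix n n 𝕜)
    (hA : A.PosDef) [Invertible A] :
    (fromBlocks A B Bᴴ D).PosDef ↔ (D - Bᴴ * A⁻¹ * B).PosDef := by
  have hunit : IsUnit (fromBlocks A B Bᴴ D) ↔ IsUnit (D - Bᴴ * A⁻¹ * B) := by
    rw [isUnit_iff_isUnit_det, isUnit_iff_isUnit_det, det_fromBlocks₁₁, invOf_eq_nonsing_inv,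
      IsUnit.mul_iff, and_iff_right (isUnit_det_of_invertible A)]
  constructor
  · intro h
    exact ((PosDef.fromBlocks₁₁ B D hA).1 h.posSemidef).posDef_iff_isUnit.2 (hunit.1 h.isUnit)
  · intro h
    exact ((PosDef.fromBlocks₁₁ B D hA).2 h.posSemidef).posDef_iff_isUnit.2 (hunit.2 h.isUnit)

variable (m R : Type*) [DecidableEq m] in
/-- Mathlib's `Matrix.J` is the negative of this matrix. -/
def stdSymplectic [Zero R] [One R] [Neg R] : Matrix (m ⊕ m) (m ⊕ m) R :=
  fromBlocks 0 1 (-1) 0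

variable {m R : Type*} [DecidableEq m] [CommRing R]

theorem transpose_stdSymplectic : (stdSymplectic m R)ᵀ = -stdSymplectic m R := by
  simp [stdSymplectic, fromBlocks_transpose, fromBlocks_neg]

variable [Fintype m]

theorem stdSymplectic_mul_fromBlocks (A B C D : Matrix m m R) :
    stdSymplectic m R * fromBlocks A B C D = fromBlocks C D (-A) (-B) := by
  simp [stdSymplectic, fromBlocks_multiply]

theorem toBlocks₁₁_stdSymplectic_mul (J : Matrix (m ⊕ m) (m ⊕ m) R) :
    (stdSymplectic m R * J).toBlocks₁₁ = J.toBlocks₂₁ := by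
  rw [← fromBlocks_toBlocks J, stdSymplectic_mul_fromBlocks, toBlocks_fromBlocks₁₁,
    toBlocks_fromBlocks₂₁]

theorem transpose_mul_mul_eq_self_of_isSymm_mul {n : Type*} [Fintype n] [DecidableEq n]
    {Ω J : Matrix n n R} (hΩ : Ωᵀ = -Ω) (hJ : J * J = -1) (hΩJ : (Ω * J).IsSymm) :
    Jᵀ * Ω * J = Ω := by
  have : Jᵀ * Ω = -(Ω * J) := by
    rw [← hΩJ.eq, transpose_mul, hΩ, Matrix.mul_neg, neg_neg]
  rw [this, Matrix.neg_mul, Matrix.mul_assoc, hJ, Matrix.mul_neg, Matrix.mul_one, neg_neg]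

noncomputable def siegelComplexStructure (X Y : Matrix m m R) : Matrix (m ⊕ m) (m ⊕ m) R :=
  fromBlocks (X * Y⁻¹) (-Y - X * Y⁻¹ * X) Y⁻¹ (-(Y⁻¹ * X))

theorem siegelComplexStructure_mul_self {X Y : Matrix m m R} (hY : IsUnit Y.det) :
    siegelComplexStructure X Y * siegelComplexStructure X Y = -1 := by
  rw [siegelComplexStructure, fromBlocks_multiply, ← fromBlocks_one, fromBlocks_neg, neg_zero]
  congr 1 <;>
    simp only [sub_mul, neg_mul, mul_neg, mul_sub, neg_neg, Matrix.mul_assoc, Matrix.mul_one,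
      mul_nonsing_inv _ hY, nonsing_inv_mul _ hY, mul_nonsing_inv_cancel_left _ _ hY] <;>
    abel

theorem stdSymplectic_mul_siegelComplexStructure (X Y : Matrix m m R) :
    stdSymplectic m R * siegelComplexStructure X Y =
      fromBlocks Y⁻¹ (-(Y⁻¹ * X)) (-(X * Y⁻¹)) (Y + X * Y⁻¹ * X) := by
  rw [siegelComplexStructure, stdSymplectic_mul_fromBlocks, neg_sub', neg_neg, sub_neg_eq_add]

theorem isSymm_stdSymplectic_mul_siegelComplexStructure {X Y : Matrix m m R} (hX : X.IsSymm)
    (hY : Y.IsSymm) : (stdSymplectic m R * siegelComplexStructure X Y).IsSymm := by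
  rw [stdSymplectic_mul_siegelComplexStructure]
  refine hY.inv.fromBlocks ?_ (hY.add ?_)
  · rw [transpose_neg, transpose_mul, hX.eq, hY.inv.eq]
  · rw [IsSymm, transpose_mul, transpose_mul, hX.eq, hY.inv.eq, Matrix.mul_assoc]

/-- The Schur complement of the upper left block `Y⁻¹` of `Ω₀ J_Z` is `Y`. -/
theorem posDef_stdSymplectic_mul_siegelComplexStructure {X Y : Matrix m m ℝ} (hX : X.IsSymm)
    (hY : Y.PosDef) : (stdSymplectic m ℝ * siegelComplexStructure X Y).PosDef := by
  have hYdet : IsUnit Y.det := (isUnit_iff_isUnit_det Y).1 hY.isUnit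
  have hYinv : Y⁻¹.IsSymm := (isHermitian_iff_isSymm.1 hY.1).inv
  let _ := hY.inv.isUnit.invertible
  have hB : -(X * Y⁻¹) = (-(Y⁻¹ * X))ᴴ := by
    rw [conjTranspose_eq_transpose_of_trivial, transpose_neg, transpose_mul, hX.eq, hYinv.eq]
  rw [stdSymplectic_mul_siegelComplexStructure, hB, PosDef.posDef_fromBlocks₁₁_iff _ _ hY.inv,
    ← hB, nonsing_inv_nonsing_inv _ hYdet]
  have hSchur : Y + X * Y⁻¹ * X - -(X * Y⁻¹) * Y * -(Y⁻¹ * X) = Y := by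
    simp only [neg_mul, mul_neg, neg_neg, Matrix.mul_assoc,
      nonsing_inv_mul_cancel_left _ _ hYdet, add_sub_cancel_right]
  rwa [hSchur]

noncomputable def siegelPoint (J : Matrix (m ⊕ m) (m ⊕ m) R) : Matrix m m R × Matrix m m R :=
  (J.toBlocks₁₁ * J.toBlocks₂₁⁻¹, J.toBlocks₂₁⁻¹)

theorem siegelPoint_siegelComplexStructure {X Y : Matrix m m R} (hY : IsUnit Y.det) :
    siegelPoint (siegelComplexStructure X Y) = (X, Y) := by
  simp only [siegelPoint, siegelComplexStructure, toBlocks_fromBlocks₁₁, toBlocks_fromBlocks₂₁,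
    nonsing_inv_nonsing_inv _ hY, nonsing_inv_mul_cancel_right _ _ hY]

theorem siegelComplexStructure_siegelPoint {J : Matrix (m ⊕ m) (m ⊕ m) R} (hJ : J * J = -1)
    (hC : IsUnit J.toBlocks₂₁.det) :
    siegelComplexStructure (siegelPoint J).1 (siegelPoint J).2 = J := by
  obtain ⟨A, B, C, D, rfl⟩ : ∃ A B C D, J = fromBlocks A B C D :=
    ⟨_, _, _, _, (fromBlocks_toBlocks J).symm⟩
  rw [toBlocks_fromBlocks₂₁] at hC
  rw [fromBlocks_multiply, ← fromBlocks_one, fromBlocks_neg, neg_zero, fromBlocks_inj] at hJ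
  obtain ⟨hAA, -, hCA, -⟩ := hJ
  have hB : B = (-1 - A * A) * C⁻¹ := by
    rw [← hAA]
    simp [Matrix.mul_assoc, mul_nonsing_inv _ hC]
  have hD : D = -(C * A * C⁻¹) := by
    rw [eq_neg_iff_add_eq_zero.mpr hCA]
    simp [Matrix.mul_assoc, mul_nonsing_inv _ hC]
  simp only [siegelPoint, siegelComplexStructure, toBlocks_fromBlocks₁₁, toBlocks_fromBlocks₂₁,
    nonsing_inv_nonsing_inv _ hC, nonsing_inv_mul_cancel_right _ _ hC, hB, hD]
  congr 1 <;> noncomm_ring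

theorem isSymm_siegelPoint_fst {J : Matrix (m ⊕ m) (m ⊕ m) R} (hJ : J * J = -1)
    (hΩJ : (stdSymplectic m R * J).IsSymm) (hC : IsUnit J.toBlocks₂₁.det) :
    (siegelPoint J).1.IsSymm := by
  obtain ⟨A, B, C, D, rfl⟩ : ∃ A B C D, J = fromBlocks A B C D :=
    ⟨_, _, _, _, (fromBlocks_toBlocks J).symm⟩
  rw [toBlocks_fromBlocks₂₁] at hC
  rw [fromBlocks_multiply, ← fromBlocks_one, fromBlocks_neg, neg_zero, fromBlocks_inj] at hJ
  rw [stdSymplectic_mul_fromBlocks, isSymm_fromBlocks_iff] at hΩJ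
  obtain ⟨hCsymm, -, hAD, -⟩ := hΩJ
  have hCA : Aᵀ * C = C * A := by
    rw [← neg_neg Aᵀ, ← transpose_neg, hAD, Matrix.neg_mul, eq_comm, ← add_eq_zero_iff_eq_neg]
    exact hJ.2.2.1
  have hCA' : C⁻¹ * Aᵀ = A * C⁻¹ := by
    calc C⁻¹ * Aᵀ = C⁻¹ * (Aᵀ * C) * C⁻¹ := by
          rw [← Matrix.mul_assoc, mul_nonsing_inv_cancel_right _ _ hC]
      _ = A * C⁻¹ := by rw [hCA, ← Matrix.mul_assoc, nonsing_inv_mul _ hC, Matrix.one_mul]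
  rw [siegelPoint, toBlocks_fromBlocks₁₁, toBlocks_fromBlocks₂₁, IsSymm, transpose_mul,
    transpose_nonsing_inv, hCsymm.eq, hCA']

theorem posDef_toBlocks₂₁_of_posDef_stdSymplectic_mul [PartialOrder R] [StarRing R]
    {J : Matrix (m ⊕ m) (m ⊕ m) R} (h : (stdSymplectic m R * J).PosDef) : J.toBlocks₂₁.PosDef :=
  toBlocks₁₁_stdSymplectic_mul J ▸ h.submatrix Sum.inl_injective

end Matrix

/-- The map sending a point `Z = X + iY` of the Siegel upper half space to the matrix
`J_Z` is a bijection onto the set of linear complex structures on `ℝ^{2n}` compatible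
with the standard symplectic form `Ω₀`. -/
theorem siegel_bijection_compatible_complex_structures (n : ℕ) :
    letI Ω₀ : Matrix (Fin n ⊕ Fin n) (Fin n ⊕ Fin n) ℝ := Matrix.fromBlocks 0 1 (-1) 0
    Set.BijOn
      (fun p : Matrix (Fin n) (Fin n) ℝ × Matrix (Fin n) (Fin n) ℝ =>
        Matrix.fromBlocks (p.1 * p.2⁻¹) (-p.2 - p.1 * p.2⁻¹ * p.1) (p.2⁻¹) (-(p.2⁻¹ * p.1)))
      {p : Matrix (Fin n) (Fin n) ℝ × Matrix (Fin n) (Fin n) ℝ |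
        p.1ᵀ = p.1 ∧ p.2ᵀ = p.2 ∧ p.2.PosDef}
      {J : Matrix (Fin n ⊕ Fin n) (Fin n ⊕ Fin n) ℝ |
        J * J = -1 ∧ Jᵀ * Ω₀ * J = Ω₀ ∧ (Ω₀ * J).IsSymm ∧ (Ω₀ * J).PosDef} := by
  refine Set.InvOn.bijOn (f' := siegelPoint) ⟨?_, ?_⟩ ?_ ?_
  · rintro ⟨X, Y⟩ ⟨-, -, hY⟩
    exact siegelPoint_siegelComplexStructure ((isUnit_iff_isUnit_det Y).1 hY.isUnit)
  · rintro J ⟨hJ, -, -, hpos⟩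
    have hC := posDef_toBlocks₂₁_of_posDef_stdSymplectic_mul hpos
    exact siegelComplexStructure_siegelPoint hJ ((isUnit_iff_isUnit_det _).1 hC.isUnit)
  · rintro ⟨X, Y⟩ ⟨hX, hY, hYpos⟩
    have hJ := siegelComplexStructure_mul_self (X := X) ((isUnit_iff_isUnit_det Y).1 hYpos.isUnit)
    have hsymm := isSymm_stdSymplectic_mul_siegelComplexStructure (R := ℝ) hX hY
    exact ⟨hJ, transpose_mul_mul_eq_self_of_isSymm_mul transpose_stdSymplectic hJ hsymm, hsymm,
      posDef_stdSymplectic_mul_siegelComplexStructure hX hYpos⟩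
  · rintro J ⟨hJ, -, hsymm, hpos⟩
    have hC := posDef_toBlocks₂₁_of_posDef_stdSymplectic_mul hpos
    exact ⟨isSymm_siegelPoint_fst hJ hsymm ((isUnit_iff_isUnit_det _).1 hC.isUnit),
      (isHermitian_iff_isSymm.1 hC.1).inv, hC.inv⟩
end

section
/- Let Ω be an invertible real m×m matrix with Ωᵀ = -Ω, and let J : ℝ → Matrix (Fin m) (Fin m) ℝ be differentiable at t₀ and satisfy (J t) * (J t) = -1 and (J t)ᵀ * Ω * (J t) = Ω for all t. Write J_ℂ t and Ω_ℂ for the entrywise complexifications. Let X, Y : ℝ → (Fin m → ℂ) be differentiable at t₀ with derivatives X', Y', and suppose that for all t, (J_ℂ t).mulVec (X t) = i • X t and (J_ℂ t).mulVec (Y t) = i • Y t (i.e. X t and Y t are of type (1,0) for J t). Define h : ℝ → ℂ by h t := (X t) ⬝ᵥ ((Ω_ℂ * J_ℂ t).mulVec (star ∘ Y t)), where star ∘ Y t is the entrywise complex conjugate of Y t, and define ∇X := (1/2) • ((1 - i•(J_ℂ t₀)).mulVec X') and ∇Y := (1/2) • ((1 - i•(J_ℂ t₀)).mulVec Y'). Then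 h is differentiable at t₀ with derivative (∇X) ⬝ᵥ ((Ω_ℂ * J_ℂ t₀).mulVec (star ∘ Y t₀)) + (X t₀) ⬝ᵥ ((Ω_ℂ * J_ℂ t₀).mulVec (star ∘ ∇Y)). -/
open Matrix

attribute [local instance] Matrix.normedAddCommGroup Matrix.normedSpace


/-- Orthogonality of eigenvectors of `J` (same eigenvalue squaring to `-1`)
with respect to the complexified symplectic form. -/
lemma aux_key {m : ℕ} (Ωc Jc : Matrix (Fin m) (Fin m) ℂ)
    (hsymp : Jcᵀ * Ωc * Jc = Ωc) {c : ℂ} (hc : c * c = -1)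
    {u v : Fin m → ℂ} (hu : Jc *ᵥ u = c • u) (hv : Jc *ᵥ v = c • v) :
    u ⬝ᵥ Ωc *ᵥ v = 0 := by
  have h : u ⬝ᵥ Ωc *ᵥ v = -(u ⬝ᵥ Ωc *ᵥ v) := by
    conv_lhs => rw [← hsymp, ← Matrix.mulVec_mulVec, ← Matrix.mulVec_mulVec,
      Matrix.dotProduct_mulVec, Matrix.vecMul_transpose, hu, hv,
      Matrix.mulVec_smul, smul_dotProduct, dotProduct_smul,
      smul_smul, hc]
    simp
  linear_combination h / 2

/-- A real matrix (complexified) commutes with entrywise complex conjugation. -/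
lemma aux_conj_mulVec {m : ℕ} (A : Matrix (Fin m) (Fin m) ℝ) (v : Fin m → ℂ) :
    (A.map fun x => (x : ℂ)) *ᵥ (star ∘ v) = star ∘ ((A.map fun x => (x : ℂ)) *ᵥ v) := by
  funext j
  simp only [Matrix.mulVec, dotProduct, Function.comp_apply, Matrix.map_apply,
    star_sum, star_mul']
  refine Finset.sum_congr rfl fun l _ => ?_
  rw [RCLike.star_def, Complex.conj_ofReal, mul_comm]

/-- Compatibility of the connection `∇_V Z = π^{1,0} V[Z]` with the Hermitian structure
`h(x,y) = g(x, ȳ)` on the holomorphic tangent bundle of a family of compatible complex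
structures. -/
theorem connection_compatible_with_hermitian_structure
    (m : ℕ) (Ω : Matrix (Fin m) (Fin m) ℝ)
    (hΩinv : IsUnit Ω) (hΩskew : Ωᵀ = -Ω)
    (J : ℝ → Matrix (Fin m) (Fin m) ℝ) (t₀ : ℝ)
    (hJdiff : DifferentiableAt ℝ J t₀)
    (hJ2 : ∀ t : ℝ, J t * J t = -1)
    (hJΩ : ∀ t : ℝ, (J t)ᵀ * Ω * J t = Ω)
    (X Y : ℝ → (Fin m → ℂ)) (X' Y' : Fin m → ℂ)
    (hX : HasDerivAt X X' t₀) (hY : HasDerivAt Y Y' t₀)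
    (hXtype : ∀ t : ℝ, ((J t).map (fun x => (x : ℂ))).mulVec (X t) = Complex.I • X t)
    (hYtype : ∀ t : ℝ, ((J t).map (fun x => (x : ℂ))).mulVec (Y t) = Complex.I • Y t) :
    letI Ωc : Matrix (Fin m) (Fin m) ℂ := Ω.map (fun x => (x : ℂ))
    letI Jc : ℝ → Matrix (Fin m) (Fin m) ℂ := fun t => (J t).map (fun x => (x : ℂ))
    letI nablaX : Fin m → ℂ := (1/2 : ℂ) • ((1 - Complex.I • Jc t₀).mulVec X')
    letI nablaY : Fin m → ℂ := (1/2 : ℂ) • ((1 - Complex.I • Jc t₀).mulVec Y')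
    HasDerivAt (fun t : ℝ => X t ⬝ᵥ (Ωc * Jc t).mulVec (star ∘ Y t))
      (nablaX ⬝ᵥ (Ωc * Jc t₀).mulVec (star ∘ Y t₀) +
        X t₀ ⬝ᵥ (Ωc * Jc t₀).mulVec (star ∘ nablaY)) t₀ := by
  -- abbreviations (plain terms, not goal lets)
  set J' : Matrix (Fin m) (Fin m) ℝ := deriv J t₀ with hJ'def
  have hJd : HasDerivAt J J' t₀ := hJdiff.hasDerivAt
  -- componentwise derivatives of J
  have hJcomp : ∀ k l, HasDerivAt (fun t => J t k l) (J' k l) t₀ := by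
    intro k l
    let L : Matrix (Fin m) (Fin m) ℝ →ₗ[ℝ] ℝ :=
      { toFun := fun A => A k l, map_add' := fun _ _ => rfl, map_smul' := fun _ _ => rfl }
    exact (LinearMap.toContinuousLinearMap L).hasFDerivAt.comp_hasDerivAt t₀ hJd
  have hJcompC : ∀ k l, HasDerivAt (fun t => ((J t k l : ℝ) : ℂ)) ((J' k l : ℂ)) t₀ :=
    fun k l => (hJcomp k l).ofReal_comp
  have hXcomp : ∀ i, HasDerivAt (fun t => X t i) (X' i) t₀ := by
    intro i
    exact (ContinuousLinearMap.proj (R := ℝ) (φ := fun _ : Fin m => ℂ)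
      i).hasFDerivAt.comp_hasDerivAt t₀ hX
  have hYstar : ∀ j, HasDerivAt (fun t => star (Y t j)) (star (Y' j)) t₀ := by
    intro j
    let L : (Fin m → ℂ) →ₗ[ℝ] ℂ :=
      { toFun := fun v => star (v j), map_add' := fun _ _ => by simp,
        map_smul' := fun r v => by simp [star_smul] }
    exact (LinearMap.toContinuousLinearMap L).hasFDerivAt.comp_hasDerivAt t₀ hY
  -- anticommutation J' J + J J' = 0 (differentiate J² = -1)
  have hanti : J' * J t₀ + J t₀ * J' = 0 := by
    ext k j
    have h1 : HasDerivAt (fun t => (J t * J t) k j) ((J' * J t₀ + J t₀ * J') k j) t₀ := by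
      simp only [Matrix.mul_apply, Matrix.add_apply, ← Finset.sum_add_distrib]
      exact HasDerivAt.fun_sum fun l _ => (hJcomp k l).mul (hJcomp l j)
    have h2 : (fun t => (J t * J t) k j) = fun _ : ℝ => (-1 : Matrix (Fin m) (Fin m) ℝ) k j := by
      funext t; rw [hJ2 t]
    rw [h2] at h1
    have h0 := (hasDerivAt_const t₀ ((-1 : Matrix (Fin m) (Fin m) ℝ) k j)).unique h1
    simpa using h0.symm
  -- complexified identities
  have mapmul : ∀ A B : Matrix (Fin m) (Fin m) ℝ,
      ((A * B).map fun x => (x : ℂ)) = (A.map fun x => (x : ℂ)) * (B.map fun x => (x : ℂ)) := by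
    intro A B
    exact Matrix.map_mul (f := Complex.ofRealHom)
  have hJ2c : ∀ t, ((J t).map fun x => (x : ℂ)) * ((J t).map fun x => (x : ℂ)) = -1 := by
    intro t
    rw [← mapmul, hJ2 t]
    ext i j
    simp [Matrix.map_apply, Matrix.one_apply, apply_ite (fun x : ℝ => (x : ℂ))]
  have hsympc : ∀ t, ((J t).map fun x => (x : ℂ))ᵀ * (Ω.map fun x => (x : ℂ)) *
      ((J t).map fun x => (x : ℂ)) = Ω.map fun x => (x : ℂ) := by
    intro t
    rw [← Matrix.transpose_map, ← mapmul, ← mapmul, hJΩ t]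
  have hantic : (J'.map fun x => (x : ℂ)) * ((J t₀).map fun x => (x : ℂ))
      + ((J t₀).map fun x => (x : ℂ)) * (J'.map fun x => (x : ℂ)) = 0 := by
    ext k j
    have h := congrArg (fun A : Matrix (Fin m) (Fin m) ℝ => A k j) hanti
    simp only [Matrix.add_apply, Matrix.mul_apply, Matrix.zero_apply] at h
    simp only [Matrix.add_apply, Matrix.mul_apply, Matrix.zero_apply, Matrix.map_apply]
    exact_mod_cast congrArg (fun x : ℝ => (x : ℂ)) h
  -- shorthand for the complexified matrices
  -- expansion of the pairing as a triple sum
  have hexp : ∀ (M : Matrix (Fin m) (Fin m) ℝ) (a b : Fin m → ℂ),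
      a ⬝ᵥ ((Ω.map fun x => (x : ℂ)) * (M.map fun x => (x : ℂ))) *ᵥ b
        = ∑ i, ∑ k, ∑ j, a i * ((Ω i k : ℂ) * (((M k j : ℝ) : ℂ) * b j)) := by
    intro M a b
    simp only [dotProduct, Matrix.mulVec, Matrix.mul_apply, Matrix.map_apply,
      Finset.mul_sum, Finset.sum_mul, mul_assoc]
    exact Finset.sum_congr rfl fun i _ => Finset.sum_comm
  -- the function, rewritten as a triple sum
  have hfun : (fun t : ℝ => X t ⬝ᵥ ((Ω.map fun x => (x : ℂ)) * ((J t).map fun x => (x : ℂ))) *ᵥ (star ∘ Y t))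
      = fun t => ∑ i, ∑ k, ∑ j, X t i * ((Ω i k : ℂ) * (((J t k j : ℝ) : ℂ) * star (Y t j))) := by
    funext t
    simpa only [Function.comp_apply] using hexp (J t) (X t) (star ∘ Y t)
  -- derivative of the triple sum
  have hD : HasDerivAt
      (fun t => ∑ i, ∑ k, ∑ j, X t i * ((Ω i k : ℂ) * (((J t k j : ℝ) : ℂ) * star (Y t j))))
      (∑ i, ∑ k, ∑ j,
        (X' i * ((Ω i k : ℂ) * (((J t₀ k j : ℝ) : ℂ) * star (Y t₀ j)))
          + X t₀ i * ((Ω i k : ℂ) * (((J' k j : ℝ) : ℂ) * star (Y t₀ j))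
              + (Ω i k : ℂ) * (((J t₀ k j : ℝ) : ℂ) * star (Y' j))))) t₀ := by
    refine HasDerivAt.fun_sum fun i _ => HasDerivAt.fun_sum fun k _ => HasDerivAt.fun_sum fun j _ => ?_
    have h1 : HasDerivAt (fun t => ((Ω i k : ℂ) * (((J t k j : ℝ) : ℂ) * star (Y t j))))
        ((Ω i k : ℂ) * (((J' k j : ℝ) : ℂ) * star (Y t₀ j))
          + (Ω i k : ℂ) * (((J t₀ k j : ℝ) : ℂ) * star (Y' j))) t₀ := by
      have h2 := ((hJcompC k j).mul (hYstar j)).const_mul ((Ω i k : ℂ))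
      simpa [mul_add] using h2
    exact (hXcomp i).mul h1
  -- eigenvector facts
  have hYbar : ((J t₀).map fun x => (x : ℂ)) *ᵥ (star ∘ Y t₀)
      = (-Complex.I) • (star ∘ Y t₀) := by
    rw [aux_conj_mulVec, hYtype t₀]
    funext j
    simp [Function.comp, smul_eq_mul, star_mul', Complex.star_def, Complex.conj_I]
  have eigw1 : ((J t₀).map fun x => (x : ℂ)) *ᵥ (X' + Complex.I • (((J t₀).map fun x => (x : ℂ)) *ᵥ X'))
      = (-Complex.I) • (X' + Complex.I • (((J t₀).map fun x => (x : ℂ)) *ᵥ X')) := by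
    rw [Matrix.mulVec_add, Matrix.mulVec_smul, Matrix.mulVec_mulVec, hJ2c t₀,
      Matrix.neg_mulVec, Matrix.one_mulVec]
    rw [smul_neg, smul_add, smul_smul, neg_mul, Complex.I_mul_I, neg_neg, one_smul, neg_smul]
    abel
  have eigw2 : ((J t₀).map fun x => (x : ℂ)) *ᵥ ((star ∘ Y') - Complex.I • (((J t₀).map fun x => (x : ℂ)) *ᵥ (star ∘ Y')))
      = Complex.I • ((star ∘ Y') - Complex.I • (((J t₀).map fun x => (x : ℂ)) *ᵥ (star ∘ Y'))) := by
    rw [Matrix.mulVec_sub, Matrix.mulVec_smul, Matrix.mulVec_mulVec, hJ2c t₀,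
      Matrix.neg_mulVec, Matrix.one_mulVec]
    rw [smul_neg, sub_neg_eq_add, smul_sub, smul_smul, Complex.I_mul_I, neg_one_smul,
      sub_neg_eq_add]
    abel
  have eigJ'Y : ((J t₀).map fun x => (x : ℂ)) *ᵥ ((J'.map fun x => (x : ℂ)) *ᵥ (star ∘ Y t₀))
      = Complex.I • ((J'.map fun x => (x : ℂ)) *ᵥ (star ∘ Y t₀)) := by
    rw [Matrix.mulVec_mulVec]
    have hJJ' : ((J t₀).map fun x => (x : ℂ)) * (J'.map fun x => (x : ℂ))
        = -((J'.map fun x => (x : ℂ)) * ((J t₀).map fun x => (x : ℂ))) :=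
      eq_neg_of_add_eq_zero_right hantic
    rw [hJJ', Matrix.neg_mulVec, ← Matrix.mulVec_mulVec, hYbar, Matrix.mulVec_smul,
      neg_smul, neg_neg]
  have hmI : (-Complex.I) * (-Complex.I) = -1 := by
    simpa using Complex.I_mul_I
  -- orthogonality relations
  have orth1 : (X' + Complex.I • (((J t₀).map fun x => (x : ℂ)) *ᵥ X')) ⬝ᵥ
      ((Ω.map fun x => (x : ℂ)) * ((J t₀).map fun x => (x : ℂ))) *ᵥ (star ∘ Y t₀) = 0 := by
    rw [← Matrix.mulVec_mulVec, hYbar, Matrix.mulVec_smul, dotProduct_smul,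
      aux_key _ _ (hsympc t₀) hmI eigw1 hYbar, smul_zero]
  have orth2 : X t₀ ⬝ᵥ ((Ω.map fun x => (x : ℂ)) * (J'.map fun x => (x : ℂ))) *ᵥ (star ∘ Y t₀) = 0 := by
    rw [← Matrix.mulVec_mulVec]
    exact aux_key _ _ (hsympc t₀) Complex.I_mul_I (hXtype t₀) eigJ'Y
  have orth3 : X t₀ ⬝ᵥ ((Ω.map fun x => (x : ℂ)) * ((J t₀).map fun x => (x : ℂ))) *ᵥ
      ((star ∘ Y') - Complex.I • (((J t₀).map fun x => (x : ℂ)) *ᵥ (star ∘ Y'))) = 0 := by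
    rw [← Matrix.mulVec_mulVec, eigw2, Matrix.mulVec_smul, dotProduct_smul,
      aux_key _ _ (hsympc t₀) Complex.I_mul_I (hXtype t₀) eigw2, smul_zero]
  -- decomposition of X'
  have hsplitX : X' = (1/2 : ℂ) • ((1 - Complex.I • ((J t₀).map fun x => (x : ℂ))) *ᵥ X')
      + (1/2 : ℂ) • (X' + Complex.I • (((J t₀).map fun x => (x : ℂ)) *ᵥ X')) := by
    rw [Matrix.sub_mulVec, Matrix.one_mulVec, Matrix.smul_mulVec]
    module
  -- conjugate of nablaY
  have hsn : star ∘ ((1/2 : ℂ) • ((1 - Complex.I • ((J t₀).map fun x => (x : ℂ))) *ᵥ Y'))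
      = (1/2 : ℂ) • ((star ∘ Y') + Complex.I • (((J t₀).map fun x => (x : ℂ)) *ᵥ (star ∘ Y'))) := by
    have h1 : (1 - Complex.I • ((J t₀).map fun x => (x : ℂ))) *ᵥ Y'
        = Y' - Complex.I • (((J t₀).map fun x => (x : ℂ)) *ᵥ Y') := by
      rw [Matrix.sub_mulVec, Matrix.one_mulVec, Matrix.smul_mulVec]
    rw [h1]
    funext j
    have h2 := congrFun (aux_conj_mulVec (J t₀) Y') j
    simp only [Function.comp_apply, Pi.smul_apply, Pi.sub_apply, Pi.add_apply, smul_eq_mul] at h2 ⊢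
    rw [star_mul', star_sub, star_mul']
    rw [← h2]
    simp [Complex.star_def, Complex.conj_I, map_div₀, _root_.map_one, map_ofNat]
  -- decomposition of star ∘ Y'
  have hsplitY : (star ∘ Y' : Fin m → ℂ)
      = (1/2 : ℂ) • ((star ∘ Y') + Complex.I • (((J t₀).map fun x => (x : ℂ)) *ᵥ (star ∘ Y')))
      + (1/2 : ℂ) • ((star ∘ Y') - Complex.I • (((J t₀).map fun x => (x : ℂ)) *ᵥ (star ∘ Y'))) := by
    module
  -- value of the derivative
  have hDval : (∑ i, ∑ k, ∑ j,
        (X' i * ((Ω i k : ℂ) * (((J t₀ k j : ℝ) : ℂ) * star (Y t₀ j)))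
          + X t₀ i * ((Ω i k : ℂ) * (((J' k j : ℝ) : ℂ) * star (Y t₀ j))
              + (Ω i k : ℂ) * (((J t₀ k j : ℝ) : ℂ) * star (Y' j)))))
      = X' ⬝ᵥ ((Ω.map fun x => (x : ℂ)) * ((J t₀).map fun x => (x : ℂ))) *ᵥ (star ∘ Y t₀)
        + X t₀ ⬝ᵥ ((Ω.map fun x => (x : ℂ)) * (J'.map fun x => (x : ℂ))) *ᵥ (star ∘ Y t₀)
        + X t₀ ⬝ᵥ ((Ω.map fun x => (x : ℂ)) * ((J t₀).map fun x => (x : ℂ))) *ᵥ (star ∘ Y') := by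
    rw [hexp (J t₀) X' (star ∘ Y t₀), hexp J' (X t₀) (star ∘ Y t₀), hexp (J t₀) (X t₀) (star ∘ Y')]
    simp only [Function.comp_apply, ← Finset.sum_add_distrib]
    exact Finset.sum_congr rfl fun i _ => Finset.sum_congr rfl fun k _ =>
      Finset.sum_congr rfl fun j _ => by ring
  -- put everything together
  have htarget :
      X' ⬝ᵥ ((Ω.map fun x => (x : ℂ)) * ((J t₀).map fun x => (x : ℂ))) *ᵥ (star ∘ Y t₀)
        + X t₀ ⬝ᵥ ((Ω.map fun x => (x : ℂ)) * (J'.map fun x => (x : ℂ))) *ᵥ (star ∘ Y t₀)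
        + X t₀ ⬝ᵥ ((Ω.map fun x => (x : ℂ)) * ((J t₀).map fun x => (x : ℂ))) *ᵥ (star ∘ Y')
      = ((1/2 : ℂ) • ((1 - Complex.I • ((J t₀).map fun x => (x : ℂ))) *ᵥ X')) ⬝ᵥ
          ((Ω.map fun x => (x : ℂ)) * ((J t₀).map fun x => (x : ℂ))) *ᵥ (star ∘ Y t₀)
        + X t₀ ⬝ᵥ ((Ω.map fun x => (x : ℂ)) * ((J t₀).map fun x => (x : ℂ))) *ᵥ
          (star ∘ ((1/2 : ℂ) • ((1 - Complex.I • ((J t₀).map fun x => (x : ℂ))) *ᵥ Y'))) := by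
    rw [orth2, add_zero]
    congr 1
    · conv_lhs => rw [hsplitX, add_dotProduct, smul_dotProduct,
        smul_dotProduct, orth1, smul_zero, add_zero]
      rw [smul_dotProduct]
    · rw [hsn]
      conv_lhs => rw [hsplitY, Matrix.mulVec_add, dotProduct_add,
        Matrix.mulVec_smul, Matrix.mulVec_smul, dotProduct_smul, dotProduct_smul,
        orth3, smul_zero, add_zero]
      rw [Matrix.mulVec_smul, dotProduct_smul]
  rw [hDval, htarget] at hD
  rw [← hfun] at hD
  exact hD
end
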